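/- arXiv:quant-ph/9612017 — 3 statements merged into one kernel-verified Lean document; each statement's English description precedes it below -/
import Mathlib

section
/- Let n ≥ 2, G = (Z/2)^n, s ∈ G nonzero, g1, g2 ∈ G with g1 ⊕ g2 ∉ {0, s}, and define a(x) as the Walsh–Hadamard amplitude (1/(2·√(2^n)))·((-1)^{g1·x} + (-1)^{(g1⊕s)·x} − (-1)^{g2·x} − (-1)^{(g2⊕s)·x}). Then every x ∈ G with a(x) ≠ 0 satisfies x ≠ 0 and s·x = 0; i.e., measuring the final state yields a nonzero member of the orthogonal subgroup H^⊥ = {x : s·x = 0}. -/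
open Finset

def dot {n : ℕ} (u v : Fin n → ZMod 2) : ZMod 2 := ∑ i, u i * v i

noncomputable def sgn (b : ZMod 2) : ℝ := (-1 : ℝ) ^ b.val

noncomputable def amp {n : ℕ} (s g1 g2 x : Fin n → ZMod 2) : ℝ :=
  (1 / (2 * Real.sqrt (2 ^ n))) *
    (sgn (dot g1 x) + sgn (dot (g1 + s) x) - sgn (dot g2 x) - sgn (dot (g2 + s) x))

/-!
Since `b ↦ (-1)^b` is a character of `ZMod 2` and the dot product is bilinear, the amplitude
factors as `c · (1 + (-1)^{s·x}) · ((-1)^{g₁·x} - (-1)^{g₂·x})`. The first factor vanishes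
when `s·x = 1`, the second when `x = 0`.
-/

lemma dot_add_left {n : ℕ} (u v x : Fin n → ZMod 2) :
    dot (u + v) x = dot u x + dot v x := by
  simp only [dot, Pi.add_apply, add_mul, sum_add_distrib]

lemma dot_zero_right {n : ℕ} (u : Fin n → ZMod 2) : dot u 0 = 0 := by
  simp [dot]

lemma sgn_one : sgn 1 = -1 := by
  simp [sgn, ZMod.val_one]

lemma sgn_add (a b : ZMod 2) : sgn (a + b) = sgn a * sgn b := by
  rw [sgn, sgn, sgn, ZMod.val_add, ← neg_one_pow_eq_pow_mod_two, pow_add]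

lemma amp_eq_mul {n : ℕ} (s g1 g2 x : Fin n → ZMod 2) :
    amp s g1 g2 x = (1 / (2 * Real.sqrt (2 ^ n))) *
      ((1 + sgn (dot s x)) * (sgn (dot g1 x) - sgn (dot g2 x))) := by
  simp only [amp, dot_add_left, sgn_add]
  ring

theorem stmt3_general (n : ℕ) (s g1 g2 : Fin n → ZMod 2) :
    ∀ x : Fin n → ZMod 2, amp s g1 g2 x ≠ 0 → x ≠ 0 ∧ dot s x = 0 := by
  intro x hx
  rw [amp_eq_mul] at hx
  refine ⟨?_, ?_⟩
  · rintro rfl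
    simp [dot_zero_right] at hx
  · by_contra hsx_ne
    have hsx : dot s x = 1 := (by decide : ∀ b : ZMod 2, b ≠ 0 → b = 1) _ hsx_ne
    simp [hsx, sgn_one] at hx

theorem stmt3 (n : ℕ) (hn : 2 ≤ n) (s g1 g2 : Fin n → ZMod 2)
    (hs : s ≠ 0) (hg : g1 + g2 ≠ 0) (hgs : g1 + g2 ≠ s) :
    ∀ x : Fin n → ZMod 2, amp s g1 g2 x ≠ 0 → x ≠ 0 ∧ dot s x = 0 :=
  stmt3_general n s g1 g2
end

section
/- Let n ≥ 2, G = (Z/2)^n, and let x₁,…,x_k ∈ G be distinct with corresponding distinct values y₁,…,y_k ∈ {0,1}^{n-1} (k ≤ 2^{n-1}). Let W = {xᵢ ⊕ xⱼ : i < j} and suppose ŝ ∉ W is nonzero. Then the number of functions f̂ : G → {0,1}^{n-1} satisfying (a) f̂(xᵢ) = yᵢ for all i, and (b) f̂(x) = f̂(y) iff x = y or x = y ⊕ ŝ, is exactly (2^{n-1} − k)!. -/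
lemma card_ext_aux {A B : Type*} [Fintype A] [Fintype B] [DecidableEq A] [DecidableEq B]
    {k : ℕ} {a : Fin k → A} {b : Fin k → B} (ha : Function.Injective a) (hb : Function.Injective b)
    (hcard : Fintype.card A = Fintype.card B) :
    Nat.card {σ : A ≃ B // ∀ i, σ (a i) = b i} = (Fintype.card A - k).factorial := by
  classical
  set pA : A → Prop := fun z => z ∈ Set.range a with hpA
  set pB : B → Prop := fun z => z ∈ Set.range b with hpB
  have key : ∀ (σ : {σ : A ≃ B // ∀ i, σ (a i) = b i}) (z : A), pA z ↔ pB (σ.1 z) := by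
    rintro ⟨σ, hσ⟩ z
    constructor
    · rintro ⟨i, rfl⟩; exact ⟨i, (hσ i).symm⟩
    · rintro ⟨i, hi⟩
      exact ⟨i, σ.injective (by rw [hσ i, hi])⟩
  let Φ : {σ : A ≃ B // ∀ i, σ (a i) = b i} → ({z : A // ¬ pA z} ≃ {z : B // ¬ pB z}) :=
    fun σ => Equiv.subtypeEquiv σ.1 (fun z => not_iff_not.mpr (key σ z))
  have hbij : Function.Bijective Φ := by
    constructor
    · rintro ⟨σ, hσ⟩ ⟨τ, hτ⟩ h
      ext z
      by_cases hz : pA z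
      · obtain ⟨i, rfl⟩ := hz
        rw [hσ i, hτ i]
      · have := congrArg (fun (e : {z : A // ¬ pA z} ≃ {z : B // ¬ pB z}) => (e ⟨z, hz⟩ : B)) h
        simpa [Φ] using this
    · intro e
      let eab : {z : A // pA z} ≃ {z : B // pB z} :=
        (Equiv.ofInjective a ha).symm.trans (Equiv.ofInjective b hb)
      let σ : A ≃ B := ((Equiv.sumCompl pA).symm.trans ((eab.sumCongr e).trans (Equiv.sumCompl pB)))
      have hσa : ∀ i, σ (a i) = b i := by
        intro i
        have h1 : (Equiv.sumCompl pA).symm (a i) = Sum.inl ⟨a i, ⟨i, rfl⟩⟩ :=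
          Equiv.sumCompl_symm_apply_of_pos (p := pA) (a := a i) ⟨i, rfl⟩
        have h2 : eab ⟨a i, ⟨i, rfl⟩⟩ = ⟨b i, ⟨i, rfl⟩⟩ := by
          have : (Equiv.ofInjective a ha).symm ⟨a i, ⟨i, rfl⟩⟩ = i := by
            rw [Equiv.symm_apply_eq, Equiv.ofInjective_apply]
          simp only [eab, Equiv.trans_apply, this]
          exact Equiv.ofInjective_apply b hb i
        simp [σ, Equiv.trans_apply, h1, h2]
      have hσc : ∀ (z : A) (hz : ¬ pA z), σ z = (e ⟨z, hz⟩ : B) := by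
        intro z hz
        have h1 : (Equiv.sumCompl pA).symm z = Sum.inr ⟨z, hz⟩ :=
          Equiv.sumCompl_symm_apply_of_neg (p := pA) hz
        simp [σ, Equiv.trans_apply, h1]
      refine ⟨⟨σ, hσa⟩, ?_⟩
      ext ⟨z, hz⟩
      simp [Φ, Equiv.subtypeEquiv, hσc z hz]
  rw [Nat.card_eq_of_bijective Φ hbij]
  have hA : Fintype.card {z : A // pA z} = k := by
    rw [Fintype.card_congr (Equiv.ofInjective a ha).symm, Fintype.card_fin]
  have hB : Fintype.card {z : B // pB z} = k := by
    rw [Fintype.card_congr (Equiv.ofInjective b hb).symm, Fintype.card_fin]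
  have hcA : Fintype.card {z : A // ¬ pA z} = Fintype.card A - k := by
    rw [Fintype.card_subtype_compl, hA]
  have hcB : Fintype.card {z : B // ¬ pB z} = Fintype.card A - k := by
    rw [Fintype.card_subtype_compl, hB, hcard]
  rw [Nat.card_eq_fintype_card,
    Fintype.card_equiv (Fintype.equivOfCardEq (hcA.trans hcB.symm)), hcA]

open Finset

theorem stmt10 (n k : ℕ) (hn : 2 ≤ n) (hk : k ≤ 2 ^ (n - 1))
    (x : Fin k → (Fin n → ZMod 2)) (hx : Function.Injective x)
    (y : Fin k → (Fin (n - 1) → ZMod 2)) (hy : Function.Injective y)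
    (sh : Fin n → ZMod 2) (hsh : sh ≠ 0)
    (hshW : ∀ i j : Fin k, i ≠ j → x i + x j ≠ sh) :
    Nat.card {f : (Fin n → ZMod 2) → (Fin (n - 1) → ZMod 2) //
        (∀ i, f (x i) = y i) ∧
        (∀ a b, f a = f b ↔ a = b ∨ a = b + sh)} =
      Nat.factorial (2 ^ (n - 1) - k) := by
  classical
  have add_self : ∀ v : (Fin n → ZMod 2), v + v = 0 := by
    intro v; funext i
    have h2 : ∀ z : ZMod 2, z + z = 0 := by decide
    exact h2 (v i)
  set S := AddSubgroup.zmultiples sh with hS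
  -- membership in S
  have hmem : ∀ c : (Fin n → ZMod 2), c ∈ S ↔ c = 0 ∨ c = sh := by
    intro c
    constructor
    · rintro ⟨z, rfl⟩
      have hz : z = 2 * (z / 2) + z % 2 := (Int.mul_ediv_add_emod z 2).symm
      have h2 : (2 : ℤ) • sh = 0 := by
        rw [two_zsmul]; exact add_self sh
      have : z • sh = (z % 2) • sh := by
        conv_lhs => rw [hz]
        rw [add_zsmul, mul_comm, mul_zsmul, h2, smul_zero, zero_add]
      show z • sh = 0 ∨ z • sh = sh
      rcases Int.emod_two_eq z with h | h <;> rw [this, h]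
      · left; exact zero_zsmul sh
      · right; exact one_zsmul sh
    · rintro (rfl | rfl)
      · exact zero_mem S
      · exact ⟨1, by simpa using one_zsmul sh⟩
  have cancel : ∀ u v : (Fin n → ZMod 2), u + v + v = u := fun u v => by
    rw [add_assoc, add_self, add_zero]
  have hneg : ∀ v : (Fin n → ZMod 2), -v = v := fun v => neg_eq_of_add_eq_zero_left (add_self v)
  have hmk : ∀ a b : (Fin n → ZMod 2), (QuotientAddGroup.mk a : (Fin n → ZMod 2) ⧸ S) = QuotientAddGroup.mk b ↔
      (a = b ∨ a = b + sh) := by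
    intro a b
    rw [QuotientAddGroup.eq, hneg, hmem]
    constructor
    · rintro (h | h)
      · left
        have := cancel a b
        rw [h, zero_add] at this
        exact this.symm
      · right
        have := cancel a b
        rw [h] at this
        rw [add_comm b sh]
        exact this.symm
    · rintro (rfl | rfl)
      · left; exact add_self a
      · right; rw [add_right_comm, add_self, zero_add]
  -- cardinalities
  have hcardG : Nat.card (Fin n → ZMod 2) = 2 ^ n := by
    simp [Nat.card_eq_fintype_card]
  have hcardS : Nat.card S = 2 := by
    rw [hS, Nat.card_zmultiples]
    exact addOrderOf_eq_prime (by rw [two_nsmul]; exact add_self sh) hsh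
  have hcardQ : Nat.card ((Fin n → ZMod 2) ⧸ S) = 2 ^ (n - 1) := by
    have h := AddSubgroup.card_eq_card_quotient_mul_card_addSubgroup S
    rw [hcardG, hcardS] at h
    have hn' : 2 ^ n = 2 ^ (n - 1) * 2 := by
      rw [← pow_succ]
      congr 1
      omega
    rw [hn'] at h
    omega
  have hcardY : Nat.card (Fin (n - 1) → ZMod 2) = 2 ^ (n - 1) := by
    simp [Nat.card_eq_fintype_card]
  letI : Fintype ((Fin n → ZMod 2) ⧸ S) := Fintype.ofFinite _
  -- the marked points in the quotient
  set mkx : Fin k → (Fin n → ZMod 2) ⧸ S := fun i => QuotientAddGroup.mk (x i) with hmkx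
  have hmkxinj : Function.Injective mkx := by
    intro i j hij
    rcases (hmk (x i) (x j)).mp hij with h | h
    · exact hx h
    · by_contra hne
      apply hshW i j hne
      rw [h, add_right_comm, add_self, zero_add]
  -- reduce to counting equivs
  have hQY : Fintype.card ((Fin n → ZMod 2) ⧸ S) = Fintype.card (Fin (n - 1) → ZMod 2) := by
    rw [← Nat.card_eq_fintype_card, ← Nat.card_eq_fintype_card, hcardQ, hcardY]
  let Ψ : {σ : (Fin n → ZMod 2) ⧸ S ≃ (Fin (n - 1) → ZMod 2) // ∀ i, σ (mkx i) = y i} →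
      {f : (Fin n → ZMod 2) → (Fin (n - 1) → ZMod 2) // (∀ i, f (x i) = y i) ∧ (∀ a b, f a = f b ↔ a = b ∨ a = b + sh)} :=
    fun σ => ⟨fun a => σ.1 (QuotientAddGroup.mk a), fun i => σ.2 i, fun a b => by
      rw [Equiv.apply_eq_iff_eq, hmk]⟩
  have hΨbij : Function.Bijective Ψ := by
    constructor
    · rintro ⟨σ, hσ⟩ ⟨τ, hτ⟩ h
      have h' := congrArg Subtype.val h
      simp only [Ψ] at h'
      apply Subtype.ext
      apply Equiv.ext
      intro q
      induction q using QuotientAddGroup.induction_on with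
      | H a => exact congrFun h' a
    · rintro ⟨f, hf1, hf2⟩
      -- build g on the quotient
      set g : (Fin n → ZMod 2) ⧸ S → (Fin (n - 1) → ZMod 2) := fun q => f q.out with hg
      have hgmk : ∀ a : (Fin n → ZMod 2), g (QuotientAddGroup.mk a) = f a := by
        intro a
        apply (hf2 _ _).mpr
        apply (hmk _ _).mp
        exact QuotientAddGroup.out_eq' _
      have hginj : Function.Injective g := by
        intro q q' hqq'
        rcases (hf2 _ _).mp hqq' with h | h
        · rw [← QuotientAddGroup.out_eq' q, ← QuotientAddGroup.out_eq' q']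
          exact congrArg _ h
        · rw [← QuotientAddGroup.out_eq' q, ← QuotientAddGroup.out_eq' q']
          exact (hmk _ _).mpr (Or.inr h)
      have hgbij : Function.Bijective g :=
        (Fintype.bijective_iff_injective_and_card g).mpr ⟨hginj, hQY⟩
      refine ⟨⟨Equiv.ofBijective g hgbij, fun i => ?_⟩, ?_⟩
      · show g (mkx i) = y i
        rw [hmkx]
        rw [hgmk (x i)]
        exact hf1 i
      · apply Subtype.ext
        funext a
        exact hgmk a
  rw [← Nat.card_eq_of_bijective Ψ hΨbij,
    card_ext_aux hmkxinj hy hQY.symm.symm]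
  congr 1
  rw [← Nat.card_eq_fintype_card, hcardQ]
end

section
/- Let n ≥ 2, G = (Z/2)^n, and let x₁,…,x_k ∈ G be distinct with distinct values y₁,…,y_k ∈ {0,1}^{n-1}. Let W = {xᵢ ⊕ xⱼ : i < j} have cardinality m. Then the number of functions f̂ : G → {0,1}^{n-1} satisfying f̂(xᵢ) = yᵢ for all i and the promise that there exists a nonzero ŝ with f̂(x) = f̂(y) iff x = y or x = y ⊕ ŝ, is exactly (2^n − m − 1)·(2^{n-1} − k)!, and for each fixed compatible ŝ (nonzero, ∉ W) exactly (2^{n-1} − k)! of these functions satisfy the promise with that ŝ. -/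
/-!
Fix a nonzero `s` with `s + s = 0`. A function whose fibres are exactly the pairs `{a, a + s}` is
the same as an injective function on `G ⧸ ⟨s⟩`; when `|G| = 2 |Y|` these are the bijections
`G ⧸ ⟨s⟩ ≃ Y`, and prescribing the values on the `k` classes of the `xᵢ` leaves `(|Y| - k)!` of
them. Those classes are distinct exactly when no `xᵢ ⊕ xⱼ` equals `s`, i.e. `s ∉ W`; if `s ∈ W`
no such function exists, since it would force `yᵢ = yⱼ`. The shift of a promise function is
unique (it is the nonzero point with `f s = f 0`), so the total is the sum over the
`2^n - 1 - m` compatible shifts.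
-/

open Finset Function

theorem card_injective_extending_eq {ι β γ : Type*} [Finite ι] [Finite β] [Finite γ]
    (hcard : Nat.card β = Nat.card γ) (t : ι → β) (ht : Injective t)
    (y : ι → γ) (hy : Injective y) :
    Nat.card {g : β → γ // Injective g ∧ ∀ i, g (t i) = y i} =
      (Nat.card γ - Nat.card ι).factorial := by
  classical
  have := Fintype.ofFinite β
  have := Fintype.ofFinite γ
  have := Fintype.ofFinite ι
  simp only [Nat.card_eq_fintype_card] at hcard ⊢
  let e₀ : Set.range t ≃ Set.range y :=
    (Equiv.ofInjective t ht).symm.trans (Equiv.ofInjective y hy)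
  have he₀ (e : β ≃ γ) : (∀ p : Set.range t, e p = e₀ p) ↔ ∀ i, e (t i) = y i := by
    refine ⟨fun h i => by simpa [e₀] using h ⟨t i, i, rfl⟩, ?_⟩
    rintro h ⟨-, i, rfl⟩
    simpa [e₀] using h i
  have hequiv : Fintype.card {e : β ≃ γ // ∀ i, e (t i) = y i} =
      Fintype.card {g : β → γ // Injective g ∧ ∀ i, g (t i) = y i} := by
    refine Fintype.card_of_bijective (f := fun e => ⟨e.1, e.1.injective, e.2⟩) ⟨?_, ?_⟩
    · intro e e' h
      exact Subtype.ext (Equiv.coe_fn_injective (congrArg Subtype.val h))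
    · rintro ⟨g, hg, hgt⟩
      have hbij : Bijective g := (Fintype.bijective_iff_injective_and_card g).2 ⟨hg, hcard⟩
      exact ⟨⟨Equiv.ofBijective g hbij, hgt⟩, rfl⟩
  have hcompl : Fintype.card ((Set.range t)ᶜ : Set β) = Fintype.card ((Set.range y)ᶜ : Set γ) := by
    simp only [Fintype.card_compl_set, Set.card_range_of_injective ht,
      Set.card_range_of_injective hy, hcard]
  rw [← hequiv, Fintype.card_congr ((Equiv.subtypeEquivRight he₀).symm.trans (Equiv.Set.compl e₀)),
    Fintype.card_equiv (Fintype.equivOfCardEq hcompl), Fintype.card_compl_set,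
    Set.card_range_of_injective ht, hcard]

theorem Function.Surjective.card_interpolating_eq_card_injective {ι α β γ : Type*}
    {π : α → β} (hπ : Surjective π) (x : ι → α) (y : ι → γ) :
    Nat.card {f : α → γ // (∀ i, f (x i) = y i) ∧ ∀ a b, f a = f b ↔ π a = π b} =
      Nat.card {g : β → γ // Injective g ∧ ∀ i, g (π (x i)) = y i} := by
  symm
  refine Nat.card_eq_of_bijective (fun g => ⟨g.1 ∘ π, g.2.2, fun _ _ => g.2.1.eq_iff⟩) ⟨?_, ?_⟩
  · intro g g' h
    exact Subtype.ext (hπ.injective_comp_right (congrArg Subtype.val h))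
  · rintro ⟨f, hfx, hfπ⟩
    have hf (a : α) : f (surjInv hπ (π a)) = f a := (hfπ _ _).2 (surjInv_eq hπ _)
    refine ⟨⟨f ∘ surjInv hπ, fun b b' h => ?_, fun i => (hf _).trans (hfx i)⟩,
      Subtype.ext (funext hf)⟩
    simpa only [surjInv_eq hπ] using (hfπ _ _).1 h

section ShiftedFibres

variable {G : Type*} [AddGroup G] {s : G}

theorem mem_zmultiples_iff_of_add_self (hs : s + s = 0) {c : G} :
    c ∈ AddSubgroup.zmultiples s ↔ c = 0 ∨ c = s := by
  refine ⟨?_, ?_⟩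
  · rintro ⟨k, rfl⟩
    dsimp only
    obtain ⟨m, rfl | rfl⟩ := Int.even_or_odd' k
    · rw [mul_comm, mul_zsmul, two_zsmul, hs, zsmul_zero]
      exact Or.inl rfl
    · rw [add_zsmul, mul_comm, mul_zsmul, two_zsmul, hs, zsmul_zero, zero_add, one_zsmul]
      exact Or.inr rfl
  · rintro (rfl | rfl)
    exacts [zero_mem _, AddSubgroup.mem_zmultiples _]

theorem QuotientAddGroup.mk_eq_mk_zmultiples_iff (hs : s + s = 0) {a b : G} :
    (a : G ⧸ AddSubgroup.zmultiples s) = b ↔ a = b ∨ a = b + s := by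
  rw [QuotientAddGroup.eq, mem_zmultiples_iff_of_add_self hs, neg_add_eq_zero,
    neg_add_eq_iff_eq_add]
  refine or_congr Iff.rfl ⟨fun h => ?_, fun h => ?_⟩ <;> rw [h, add_assoc, hs, add_zero]

theorem Nat.card_quotient_zmultiples_of_add_self (hs₀ : s ≠ 0) (hs : s + s = 0) :
    Nat.card G = 2 * Nat.card (G ⧸ AddSubgroup.zmultiples s) := by
  rw [AddSubgroup.card_eq_card_quotient_mul_card_addSubgroup (AddSubgroup.zmultiples s),
    Nat.card_zmultiples, addOrderOf_eq_prime (by rwa [two_nsmul]) hs₀, mul_comm]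

theorem card_interpolating_shift_eq {ι Y : Type*} [Finite G] [Finite Y] [Finite ι]
    (hs₀ : s ≠ 0) (hs : s + s = 0) (hcard : Nat.card G = 2 * Nat.card Y)
    (x : ι → G) (hx : Injective x) (hxs : ∀ i j, x i = x j + s → i = j)
    (y : ι → Y) (hy : Injective y) :
    Nat.card {f : G → Y // (∀ i, f (x i) = y i) ∧ ∀ a b, f a = f b ↔ a = b ∨ a = b + s} =
      (Nat.card Y - Nat.card ι).factorial := by
  let π : G → G ⧸ AddSubgroup.zmultiples s := QuotientAddGroup.mk
  have hπx : Injective (π ∘ x) := fun i j h =>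
    ((QuotientAddGroup.mk_eq_mk_zmultiples_iff hs).1 h).elim (fun h => hx h) (hxs i j)
  have hcardπ : Nat.card (G ⧸ AddSubgroup.zmultiples s) = Nat.card Y := by
    have := Nat.card_quotient_zmultiples_of_add_self hs₀ hs
    omega
  simp_rw [← QuotientAddGroup.mk_eq_mk_zmultiples_iff hs]
  rw [QuotientAddGroup.mk_surjective.card_interpolating_eq_card_injective]
  exact card_injective_extending_eq hcardπ _ hπx y hy

theorem card_interpolating_shift_eq_zero {ι Y : Type*} (x : ι → G) (y : ι → Y)
    (hy : Injective y) {i j : ι} (hij : i ≠ j) (hxs : x i = x j + s) :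
    Nat.card {f : G → Y // (∀ i, f (x i) = y i) ∧ ∀ a b, f a = f b ↔ a = b ∨ a = b + s} = 0 := by
  rw [Nat.card_eq_zero]
  refine Or.inl ⟨fun ⟨f, hfx, hfs⟩ => hij (hy ?_)⟩
  rw [← hfx i, ← hfx j]
  exact (hfs _ _).2 (Or.inr hxs)

open Classical in
theorem card_interpolating_shift_eq_ite {ι Y : Type*} [Finite G] [Finite Y] [Finite ι]
    (hs₀ : s ≠ 0) (hs : s + s = 0) (hcard : Nat.card G = 2 * Nat.card Y)
    (x : ι → G) (hx : Injective x) (y : ι → Y) (hy : Injective y) :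
    Nat.card {f : G → Y // (∀ i, f (x i) = y i) ∧ ∀ a b, f a = f b ↔ a = b ∨ a = b + s} =
      if ∃ i j, i ≠ j ∧ x i = x j + s then 0 else (Nat.card Y - Nat.card ι).factorial := by
  split_ifs with hcollision
  · obtain ⟨i, j, hij, hxs⟩ := hcollision
    exact card_interpolating_shift_eq_zero x y hy hij hxs
  · refine card_interpolating_shift_eq hs₀ hs hcard x hx (fun i j hxs => ?_) y hy
    exact not_not.1 fun hij => hcollision ⟨i, j, hij, hxs⟩

theorem shift_unique {Y : Type*} {f : G → Y} {s' : G} (hs₀ : s ≠ 0)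
    (hs : ∀ a b, f a = f b ↔ a = b ∨ a = b + s) (hs' : ∀ a b, f a = f b ↔ a = b ∨ a = b + s') :
    s = s' := by
  have := (hs' s 0).1 ((hs s 0).2 (Or.inr (zero_add s).symm))
  simpa [hs₀] using this

theorem card_exists_shift_eq_sum {Y : Type*} [Fintype G] [DecidableEq G] [Finite Y]
    (P : (G → Y) → Prop) :
    Nat.card {f : G → Y // P f ∧ ∃ s, s ≠ 0 ∧ ∀ a b, f a = f b ↔ a = b ∨ a = b + s} =
      ∑ s ∈ univ.filter (· ≠ 0),
        Nat.card {f : G → Y // P f ∧ ∀ a b, f a = f b ↔ a = b ∨ a = b + s} := by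
  rw [Finset.sum_subtype (p := (· ≠ 0)) _ (fun _ => by simp), ← Nat.card_sigma]
  symm
  refine Nat.card_eq_of_bijective (fun p => ⟨p.2.1, p.2.2.1, p.1.1, p.1.2, p.2.2.2⟩) ⟨?_, ?_⟩
  · rintro ⟨⟨s, hs₀⟩, f, hf, hfs⟩ ⟨⟨s', hs₀'⟩, f', hf', hfs'⟩ h
    obtain rfl : f = f' := congrArg Subtype.val h
    obtain rfl : s = s' := shift_unique hs₀ hfs hfs'
    rfl
  · rintro ⟨f, hf, s, hs₀, hfs⟩
    exact ⟨⟨⟨s, hs₀⟩, f, hf, hfs⟩, rfl⟩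

end ShiftedFibres

theorem mem_image_add_of_lt_iff {ι H : Type*} [Fintype ι] [LinearOrder ι] [AddCommGroup H]
    [DecidableEq H] (hH : ∀ a : H, a + a = 0) (x : ι → H) (s : H) :
    s ∈ (univ.filter (fun p : ι × ι => p.1 < p.2)).image (fun p => x p.1 + x p.2) ↔
      ∃ i j, i ≠ j ∧ x i = x j + s := by
  simp only [mem_image, mem_filter, mem_univ, true_and, Prod.exists]
  constructor
  · rintro ⟨i, j, hij, rfl⟩
    exact ⟨i, j, hij.ne, by rw [add_comm (x i), ← add_assoc, hH, zero_add]⟩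
  · rintro ⟨i, j, hij, h⟩
    have hsum : x i + x j = s := by rw [h, add_right_comm, hH, zero_add]
    rcases hij.lt_or_gt with hlt | hgt
    · exact ⟨i, j, hlt, hsum⟩
    · exact ⟨j, i, hgt, by rw [add_comm, hsum]⟩

theorem stmt11 (n k m : ℕ) (hn : 2 ≤ n)
    (x : Fin k → (Fin n → ZMod 2)) (hx : Function.Injective x)
    (y : Fin k → (Fin (n - 1) → ZMod 2)) (hy : Function.Injective y)
    (W : Finset (Fin n → ZMod 2))
    (hW : W = ((Finset.univ : Finset (Fin k × Fin k)).filter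
        (fun p => p.1 < p.2)).image (fun p => x p.1 + x p.2))
    (hm : W.card = m) :
    Nat.card {f : (Fin n → ZMod 2) → (Fin (n - 1) → ZMod 2) //
        (∀ i, f (x i) = y i) ∧
        ∃ sh : Fin n → ZMod 2, sh ≠ 0 ∧
          (∀ a b, f a = f b ↔ a = b ∨ a = b + sh)} =
      (2 ^ n - m - 1) * Nat.factorial (2 ^ (n - 1) - k) ∧
    ∀ sh : Fin n → ZMod 2, sh ≠ 0 → sh ∉ W →
      Nat.card {f : (Fin n → ZMod 2) → (Fin (n - 1) → ZMod 2) //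
          (∀ i, f (x i) = y i) ∧
          (∀ a b, f a = f b ↔ a = b ∨ a = b + sh)} =
        Nat.factorial (2 ^ (n - 1) - k) := by
  have hmemW (s : Fin n → ZMod 2) : s ∈ W ↔ ∃ i j, i ≠ j ∧ x i = x j + s :=
    hW ▸ mem_image_add_of_lt_iff ZModModule.add_self x s
  have hcard : Nat.card (Fin n → ZMod 2) = 2 * Nat.card (Fin (n - 1) → ZMod 2) := by
    simp only [Nat.card_fun, Nat.card_zmod, Nat.card_fin, ← pow_succ']
    congr 1
    omega
  have hcount (s : Fin n → ZMod 2) (hs₀ : s ≠ 0) :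
      Nat.card {f : (Fin n → ZMod 2) → (Fin (n - 1) → ZMod 2) //
        (∀ i, f (x i) = y i) ∧ (∀ a b, f a = f b ↔ a = b ∨ a = b + s)} =
        if s ∈ W then 0 else (2 ^ (n - 1) - k).factorial := by
    simpa [hmemW] using
      card_interpolating_shift_eq_ite hs₀ (ZModModule.add_self s) hcard x hx y hy
  refine ⟨?_, fun s hs₀ hsW => by rw [hcount s hs₀, if_neg hsW]⟩
  have h0W : (0 : Fin n → ZMod 2) ∉ W := fun h => by
    obtain ⟨i, j, hij, h⟩ := (hmemW 0).1 h
    exact hij (hx (by simpa using h))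
  have hcompat : univ.filter (fun s => s ≠ 0 ∧ s ∉ W) = (insert 0 W)ᶜ := by
    ext s
    simp
  rw [card_exists_shift_eq_sum, sum_congr rfl fun s hs => hcount s (mem_filter.1 hs).2, sum_ite,
    sum_const_zero, zero_add, sum_const, smul_eq_mul, filter_filter, hcompat, card_compl,
    card_insert_of_notMem h0W, hm]
  simp [Nat.sub_sub]
end
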